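/- Let C be a small category with Grothendieck topology J and τ : C ⥤ T a functor into a small category T, and let C' be a small category with Grothendieck topology J' and τ' : C' ⥤ T' a functor into a small category T'. Let G : T ⥤ T' be a functor such that for every Linton model M' of τ', the presheaf M' ∘ G^op (i.e., t ↦ M'(G t)) is a Linton model of τ. Then the induced restriction functor Mod^{T'} ⥤ Mod^T given by precomposition with G admits a left adjoint. -/

import Mathlib

open CategoryTheory

/-!
A presheaf `M'` on `T'` is a Linton model iff it is orthogonal to the small set of maps
`τ'_! (S ↪ y c)`, `S` a covering sieve: by the adjunction `τ'_! ⊣ τ'^*`, orthogonality to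
them is the sheaf condition on `τ'^* M'`. An orthogonality class of a small set of maps in the
locally presentable category `Psh(T')` is reflective, so `Mod^{T'} ↪ Psh(T')` is a right
adjoint, and so is `G^* : Psh(T') ⥤ Psh(T)` (with left adjoint `Lan_{G^op}`). The restriction
functor followed by the full embedding `Mod^T ↪ Psh(T)` is their composite; hence it has the
left adjoint `M ↦ reflection of Lan_{G^op} M`.
-/

universe w v₁ v₂ v₃ u₁ u₂ u₃

namespace CategoryTheory

open Limits Opposite

theorem exists_isCardinalPresentable_forall {C : Type u₁} [Category.{v₁} C] {ι : Type u₂}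
    [Small.{w} ι] (X : ι → C) [∀ i, IsPresentable.{w} (X i)] :
    ∃ (κ : Cardinal.{w}) (_ : Fact κ.IsRegular), ∀ i, IsCardinalPresentable (X i) κ := by
  choose κ hκ hX using fun i => Functor.IsAccessible.exists_cardinal (F := coyoneda.obj (op (X i)))
  obtain ⟨κ', hκ', hlt⟩ :=
    HasCardinalLT.exists_regular_cardinal_forall.{w} fun i => (κ i).ord.ToType
  have : Fact κ'.IsRegular := ⟨hκ'⟩
  refine ⟨κ', this, fun i => ?_⟩
  have hκi : κ i < κ' := by
    simpa only [hasCardinalLT_iff_cardinal_mk_lt, Cardinal.mk_toType, Cardinal.card_ord]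
      using hlt i
  have := hκ i
  have := hX i
  exact isCardinalPresentable_of_le (X i) hκi.le

theorem MorphismProperty.isRightAdjoint_ι_isLocal_of_isLocallyPresentable
    {C : Type u₁} [Category.{v₁} C] [IsLocallyPresentable.{w} C] [LocallySmall.{w} C]
    (W : MorphismProperty C) [W.IsSmall.{w}] : W.isLocal.ι.IsRightAdjoint := by
  obtain ⟨κ₀, _, _⟩ := IsLocallyPresentable.exists_cardinal.{w} C
  obtain ⟨ι, X, Y, f, rfl⟩ := (isSmall_iff_eq_ofHoms.{w} W).1 ‹_›
  obtain ⟨κ, _, hκ⟩ := exists_isCardinalPresentable_forall.{w} (Sum.elim X Y)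
  refine isRightAdjoint_ι_isLocal _ κ ?_
  rintro _ _ _ ⟨i⟩
  exact ⟨hκ (.inl i), hκ (.inr i)⟩

theorem Functor.isRightAdjoint_of_comp_fullyFaithful {C : Type u₁} [Category.{v₁} C]
    {D : Type u₂} [Category.{v₂} D] {E : Type u₃} [Category.{v₃} E] {F : D ⥤ C} {i : C ⥤ E}
    (hi : i.FullyFaithful) (hFi : (F ⋙ i).IsRightAdjoint) : F.IsRightAdjoint :=
  ⟨_, ⟨(Adjunction.ofIsRightAdjoint (F ⋙ i)).restrictFullyFaithful
    (L := i ⋙ (F ⋙ i).leftAdjoint) hi (Functor.FullyFaithful.id _) (Iso.refl _) (Iso.refl _)⟩⟩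

namespace GrothendieckTopology

variable {C : Type u₁} [Category.{v₁} C] [LocallySmall.{w} C] (J : GrothendieckTopology C)

def coveringInclusionsMap {E : Type u₂} [Category.{v₂} E] (H : (Cᵒᵖ ⥤ Type w) ⥤ E) :
    MorphismProperty E :=
  MorphismProperty.ofHoms fun S : Σ X, {S : Sieve X // S ∈ J X} =>
    H.map (Sieve.shrinkFunctor.{w} S.2.1).ι

theorem coveringInclusionsMap_map {E : Type u₂} [Category.{v₂} E] (H : (Cᵒᵖ ⥤ Type w) ⥤ E)
    {X : C} {S : Sieve X} (hS : S ∈ J X) :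
    J.coveringInclusionsMap H (H.map (Sieve.shrinkFunctor.{w} S).ι) :=
  MorphismProperty.ofHoms.mk (⟨X, S, hS⟩ : Σ X, {S : Sieve X // S ∈ J X})

theorem isLocal_coveringInclusionsMap {D : Type u₂} [Category.{v₂} D] {F : C ⥤ D}
    {H : (Cᵒᵖ ⥤ Type w) ⥤ (Dᵒᵖ ⥤ Type w)} (adj : H ⊣ (Functor.whiskeringLeft _ _ _).obj F.op) :
    (J.coveringInclusionsMap H).isLocal = fun P : Dᵒᵖ ⥤ Type w => Presieve.IsSheaf J (F.op ⋙ P) := by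
  ext P
  constructor
  · intro hP X S hS
    rw [Presieve.isSheafFor_iff_bijective_shrinkFunctor_ι_comp, ← Functor.whiskeringLeft_obj_obj,
      ← adj.map_comp_bijective_iff]
    exact hP _ (J.coveringInclusionsMap_map H hS)
  · rintro hP _ _ _ ⟨⟨X, S, hS⟩⟩
    rw [adj.map_comp_bijective_iff]
    exact (Presieve.isSheafFor_iff_bijective_shrinkFunctor_ι_comp S _).1 (hP S hS)

end GrothendieckTopology

instance {C : Type w} [SmallCategory C] (J : GrothendieckTopology C) {E : Type u₂}
    [Category.{v₂} E] (H : (Cᵒᵖ ⥤ Type w) ⥤ E) : (J.coveringInclusionsMap H).IsSmall.{w} := by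
  unfold GrothendieckTopology.coveringInclusionsMap
  infer_instance

end CategoryTheory

/-- Given Linton theories `τ : C ⥤ T` (over the site `(C, J)`) and
`τ' : C' ⥤ T'` (over the site `(C', J')`), and a functor `G : T ⥤ T'` such that
precomposition with `G` sends Linton models of `τ'` to Linton models of `τ`, the induced
restriction functor between the categories of Linton models admits a left adjoint. -/
theorem linton_restriction_has_left_adjoint
    {C : Type u} [SmallCategory C] (J : GrothendieckTopology C)
    {T : Type u} [SmallCategory T] (τ : C ⥤ T)
    {C' : Type u} [SmallCategory C'] (J' : GrothendieckTopology C')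
    {T' : Type u} [SmallCategory T'] (τ' : C' ⥤ T')
    (G : T ⥤ T')
    (h : ∀ M' : T'ᵒᵖ ⥤ Type u, Presieve.IsSheaf J' (τ'.op ⋙ M') →
      Presieve.IsSheaf J (τ.op ⋙ (G.op ⋙ M'))) :
    (ObjectProperty.lift (fun M : Tᵒᵖ ⥤ Type u => Presieve.IsSheaf J (τ.op ⋙ M))
      (ObjectProperty.ι (fun M' : T'ᵒᵖ ⥤ Type u => Presieve.IsSheaf J' (τ'.op ⋙ M')) ⋙
        (Functor.whiskeringLeft Tᵒᵖ T'ᵒᵖ (Type u)).obj G.op)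
      (fun M' => h M'.obj M'.property)).IsRightAdjoint := by
  have : (ObjectProperty.ι fun M' : T'ᵒᵖ ⥤ Type u =>
      Presieve.IsSheaf J' (τ'.op ⋙ M')).IsRightAdjoint := by
    rw [← J'.isLocal_coveringInclusionsMap (τ'.op.lanAdjunction (Type u))]
    exact MorphismProperty.isRightAdjoint_ι_isLocal_of_isLocallyPresentable _
  have : ((Functor.whiskeringLeft Tᵒᵖ T'ᵒᵖ (Type u)).obj G.op).IsRightAdjoint :=
    ⟨_, ⟨G.op.lanAdjunction _⟩⟩
  exact Functor.isRightAdjoint_of_comp_fullyFaithful (ObjectProperty.fullyFaithfulι _)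
    (Functor.isRightAdjoint_of_iso (ObjectProperty.liftCompιIso _ _ _).symm)
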